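/- arXiv:1711.02907 — 3 statements merged into one kernel-verified Lean document; each statement's English description precedes it below -/
import Mathlib

section
/- Fix $T=1$, $n\in\mathbb{N}_+$ and for $r\in[0,1]$ let $\lfloor r\rfloor_n$ denote the largest grid point $k/n$ strictly less than $r$ for $r\in(k/n,(k+1)/n]$, with $\lfloor 0\rfloor_n=0$. Let $\alpha,\beta,\beta'\in(0,1)$ satisfy $\beta'>\alpha>1-\beta$. Then there is a constant $C=C(\alpha,\beta,\beta')$, independent of $n$, such that for all grid points $s$ and all $t\in(s,1]$: $\int_s^t (t-r)^{\alpha+\beta-1}\int_s^r \frac{(\lfloor r\rfloor_n-\lfloor u\rfloor_n)^{\beta'}}{(r-u)^{\alpha+1}}\,du\,dr \le C (t-s)^{\beta+\beta'}$. -/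
open intervalIntegral

/-- Left grid projection on the uniform grid `{k/n : k = 0,…,n}` of `[0,1]`:
for `r ∈ (k/n, (k+1)/n]`, `floorG n r = k/n`, and `floorG n 0 = 0`. -/
noncomputable def floorG (n : ℕ) (r : ℝ) : ℝ := if r ≤ 0 then 0 else ((⌈n * r⌉ : ℝ) - 1) / n

/-!
For `u ≤ ⌊r⌋ₙ` one has `⌊r⌋ₙ - ⌊u⌋ₙ ≤ (r - u) + 1/n`, so by subadditivity of `x ↦ x ^ β'` the
inner integral is at most `(r - s)^{β'-α}/(β'-α) + n^{-β'} (r - ⌊r⌋ₙ)^{-α}/α`; the integrand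
vanishes for `u ∈ (⌊r⌋ₙ, r]`. If `t - s ≤ 1/n`, every `r ∈ (s, t]` lies in the cell `(s, s + 1/n]`,
so the whole integral vanishes. Otherwise `(t - r)^{α+β-1} ≤ (t - s)^{α+β-1}` because `α + β > 1`;
the first term then integrates to `O((t - s)^{β'-α+1})`, and `(r - ⌊r⌋ₙ)^{-α}` integrates to
`n^{α-1}/(1-α)` over each of the at most `2n(t - s)` cells covering `[s, t]`, which gives
`O((t - s) n^{α-β'}) = O((t - s)^{β'-α+1})` since `1/n ≤ t - s` and `α < β'`.
-/

open MeasureTheory Set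

section floorG

variable {n : ℕ}

lemma floorG_of_pos {r : ℝ} (hr : 0 < r) : floorG n r = ((⌈n * r⌉ : ℝ) - 1) / n :=
  if_neg hr.not_ge

lemma measurable_floorG (n : ℕ) : Measurable (floorG n) :=
  Measurable.ite (measurableSet_le measurable_id measurable_const) measurable_const
    (((measurable_from_top.comp (Int.measurable_ceil.comp (measurable_const_mul _))).sub
      measurable_const).div_const _)

lemma floorG_nonneg (hn : 0 < n) (r : ℝ) : 0 ≤ floorG n r := by
  rcases le_or_gt r 0 with hr | hr
  · simp [floorG, hr]
  · have : (1 : ℝ) ≤ ⌈n * r⌉ := by exact_mod_cast Int.one_le_ceil_iff.2 (by positivity)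
    rw [floorG_of_pos hr]
    exact div_nonneg (by linarith) n.cast_nonneg

lemma floorG_mono (hn : 0 < n) : Monotone (floorG n) := by
  intro u r hur
  rcases le_or_gt u 0 with hu | hu
  · simpa [floorG, hu] using floorG_nonneg hn r
  · have : (⌈n * u⌉ : ℝ) ≤ ⌈n * r⌉ := by
      exact_mod_cast Int.ceil_le_ceil (by gcongr)
    rw [floorG_of_pos hu, floorG_of_pos (hu.trans_le hur)]
    gcongr

lemma floorG_lt_self (hn : 0 < n) {r : ℝ} (hr : 0 < r) : floorG n r < r := by
  have hn' : (0 : ℝ) < n := by exact_mod_cast hn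
  rw [floorG_of_pos hr, div_lt_iff₀ hn']
  linarith [Int.ceil_lt_add_one ((n : ℝ) * r)]

lemma floorG_le_self (hn : 0 < n) {r : ℝ} (hr : 0 ≤ r) : floorG n r ≤ r := by
  rcases hr.eq_or_lt with rfl | hr
  · simp [floorG]
  · exact (floorG_lt_self hn hr).le

lemma sub_inv_le_floorG (hn : 0 < n) {r : ℝ} (hr : 0 ≤ r) : r - (n : ℝ)⁻¹ ≤ floorG n r := by
  have hn' : (0 : ℝ) < n := by exact_mod_cast hn
  rcases hr.eq_or_lt with rfl | hr
  · simp [floorG]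
  · rw [floorG_of_pos hr, le_div_iff₀ hn', sub_mul, inv_mul_cancel₀ hn'.ne']
    linarith [Int.le_ceil ((n : ℝ) * r)]

lemma natCast_div_le_floorG (hn : 0 < n) {k : ℕ} {r : ℝ} (h : (k : ℝ) / n < r) :
    (k : ℝ) / n ≤ floorG n r := by
  have hn' : (0 : ℝ) < n := by exact_mod_cast hn
  have hk : (k : ℤ) < ⌈n * r⌉ := Int.lt_ceil.2 (by push_cast; rwa [div_lt_iff₀' hn'] at h)
  have : (k : ℝ) + 1 ≤ ⌈n * r⌉ := by exact_mod_cast hk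
  rw [floorG_of_pos ((div_nonneg k.cast_nonneg hn'.le).trans_lt h)]
  gcongr
  linarith

lemma floorG_eq_of_mem_Ioc (hn : 0 < n) {j : ℕ} {r : ℝ}
    (hr : r ∈ Ioc ((j : ℝ) / n) ((j + 1) / n)) : floorG n r = j / n := by
  have hn' : (0 : ℝ) < n := by exact_mod_cast hn
  have hceil : ⌈n * r⌉ = j + 1 := by
    rw [Int.ceil_eq_iff]
    push_cast
    constructor
    · have := (div_lt_iff₀' hn').1 hr.1; linarith
    · exact (le_div_iff₀' hn').1 hr.2
  rw [floorG_of_pos ((div_nonneg j.cast_nonneg hn'.le).trans_lt hr.1), hceil]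
  push_cast
  ring

lemma floorG_eq_of_mem_Ioc_floorG (hn : 0 < n) {r u : ℝ} (hr : 0 < r)
    (hu : u ∈ Ioc (floorG n r) r) : floorG n u = floorG n r := by
  have hn' : (0 : ℝ) < n := by exact_mod_cast hn
  have hu0 : 0 < u := (floorG_nonneg hn r).trans_lt hu.1
  rw [floorG_of_pos hr] at hu ⊢
  have hle : ⌈n * u⌉ ≤ ⌈n * r⌉ := Int.ceil_le_ceil (by gcongr; exact hu.2)
  have hge : ⌈n * r⌉ - 1 < ⌈n * u⌉ :=
    Int.lt_ceil.2 (by push_cast; exact (div_lt_iff₀' hn').1 hu.1)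
  rw [floorG_of_pos hu0, show ⌈n * u⌉ = ⌈n * r⌉ by omega]

lemma floorG_sub_floorG_le (hn : 0 < n) {u r : ℝ} (hu : 0 ≤ u) (hur : u ≤ r) :
    floorG n r - floorG n u ≤ r - u + (n : ℝ)⁻¹ := by
  linarith [floorG_le_self hn (hu.trans hur), sub_inv_le_floorG hn hu]

end floorG

lemma intervalIntegrable_sub_rpow {a b r : ℝ} (q : ℝ) (ha : a < r) (hb : b < r) :
    IntervalIntegrable (fun u => (r - u) ^ q) volume a b := by
  refine ContinuousOn.intervalIntegrable <|
    (continuousOn_const.sub continuousOn_id).rpow_const fun u hu => Or.inl ?_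
  have : u < r := by rcases hu with ⟨-, hu⟩; exact hu.trans_lt (max_lt ha hb)
  exact sub_ne_zero.2 this.ne'

lemma integral_sub_rpow {a b r q : ℝ} (hq : q ≠ -1) (ha : a < r) (hb : b < r) :
    ∫ u in a..b, (r - u) ^ q = ((r - a) ^ (q + 1) - (r - b) ^ (q + 1)) / (q + 1) := by
  rw [integral_comp_sub_left (fun x => x ^ q) r,
    integral_rpow (Or.inr ⟨hq, notMem_uIcc_of_lt (by linarith) (by linarith)⟩)]

lemma intervalIntegrable_rpow_sub {q : ℝ} (hq : -1 < q) (a b : ℝ) :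
    IntervalIntegrable (fun r => (r - a) ^ q) volume a b := by
  simpa using (intervalIntegrable_rpow' (a := 0) (b := b - a) hq).comp_sub_right a

lemma integral_rpow_sub {q : ℝ} (hq : -1 < q) (a b : ℝ) :
    ∫ r in a..b, (r - a) ^ q = (b - a) ^ (q + 1) / (q + 1) := by
  rw [integral_comp_sub_right (fun x => x ^ q), integral_rpow (Or.inl hq), sub_self,
    Real.zero_rpow (by linarith), sub_zero]

section kernel

variable {n : ℕ}

noncomputable def gridKernelIntegral (n : ℕ) (α β' s r : ℝ) : ℝ :=
  ∫ u in s..r, (floorG n r - floorG n u) ^ β' / (r - u) ^ (α + 1)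

lemma floorG_kernel_nonneg (hn : 0 < n) (α β' : ℝ) {u r : ℝ} (hur : u ≤ r) :
    0 ≤ (floorG n r - floorG n u) ^ β' / (r - u) ^ (α + 1) :=
  div_nonneg (Real.rpow_nonneg (sub_nonneg.2 (floorG_mono hn hur)) _)
    (Real.rpow_nonneg (sub_nonneg.2 hur) _)

lemma floorG_kernel_eq_zero (hn : 0 < n) (α : ℝ) {β' r u : ℝ} (hβ' : β' ≠ 0) (hr : 0 < r)
    (hu : u ∈ Ioc (floorG n r) r) : (floorG n r - floorG n u) ^ β' / (r - u) ^ (α + 1) = 0 := by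
  rw [floorG_eq_of_mem_Ioc_floorG hn hr hu, sub_self, Real.zero_rpow hβ', zero_div]

lemma floorG_kernel_le (hn : 0 < n) {α β' u r : ℝ} (hβ'0 : 0 ≤ β') (hβ'1 : β' ≤ 1)
    (hu : 0 ≤ u) (hur : u < r) :
    (floorG n r - floorG n u) ^ β' / (r - u) ^ (α + 1) ≤
      (r - u) ^ (β' - α - 1) + (n : ℝ)⁻¹ ^ β' * (r - u) ^ (-α - 1) := by
  have hru : 0 < r - u := sub_pos.2 hur
  calc (floorG n r - floorG n u) ^ β' / (r - u) ^ (α + 1)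
      ≤ (r - u + (n : ℝ)⁻¹) ^ β' / (r - u) ^ (α + 1) := by
        gcongr
        · exact sub_nonneg.2 (floorG_mono hn hur.le)
        · exact floorG_sub_floorG_le hn hu hur.le
    _ ≤ ((r - u) ^ β' + (n : ℝ)⁻¹ ^ β') / (r - u) ^ (α + 1) := by
        gcongr
        exact Real.rpow_add_le_add_rpow hru.le (by positivity) hβ'0 hβ'1
    _ = (r - u) ^ (β' - α - 1) + (n : ℝ)⁻¹ ^ β' * (r - u) ^ (-α - 1) := by
        rw [show β' - α - 1 = β' - (α + 1) by ring, show -α - 1 = -(α + 1) by ring,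
          Real.rpow_sub hru, Real.rpow_neg hru.le]
        ring

lemma gridKernelIntegral_nonneg (hn : 0 < n) (α β' : ℝ) {s r : ℝ} (hsr : s ≤ r) :
    0 ≤ gridKernelIntegral n α β' s r :=
  integral_nonneg hsr fun _ hu => floorG_kernel_nonneg hn α β' hu.2

lemma gridKernelIntegral_eq_zero (hn : 0 < n) (α : ℝ) {β' s r : ℝ} (hβ' : β' ≠ 0)
    (hr : 0 < r) (hsr : s ≤ r) (hs : floorG n r ≤ s) : gridKernelIntegral n α β' s r = 0 := by
  have hzero : ∀ u ∈ uIoc s r, (floorG n r - floorG n u) ^ β' / (r - u) ^ (α + 1) = 0 :=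
    fun u hu => floorG_kernel_eq_zero hn α hβ' hr
      (Ioc_subset_Ioc_left hs (uIoc_of_le hsr ▸ hu))
  rw [gridKernelIntegral, integral_congr_ae (ae_of_all _ hzero), intervalIntegral.integral_zero]

theorem gridKernelIntegral_le (hn : 0 < n) {α β' s r : ℝ} (hα : 0 < α)
    (hαβ' : α < β') (hβ'1 : β' ≤ 1) (hs : 0 ≤ s) (hsr : s ≤ floorG n r) (hr : 0 < r) :
    gridKernelIntegral n α β' s r ≤
      (r - s) ^ (β' - α) / (β' - α) + (n : ℝ)⁻¹ ^ β' / α * (r - floorG n r) ^ (-α) := by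
  set f : ℝ → ℝ := fun u => (floorG n r - floorG n u) ^ β' / (r - u) ^ (α + 1)
  set g : ℝ → ℝ := fun u => (r - u) ^ (β' - α - 1) + (n : ℝ)⁻¹ ^ β' * (r - u) ^ (-α - 1)
  have hcr : floorG n r < r := floorG_lt_self hn hr
  have hsr' : s < r := hsr.trans_lt hcr
  have hβ'0 : 0 < β' := hα.trans hαβ'
  have hf_zero : EqOn f (fun _ => 0) (uIoc (floorG n r) r) := fun u hu =>
    floorG_kernel_eq_zero hn α hβ'0.ne' hr (uIoc_of_le hcr.le ▸ hu)
  have hfg : ∀ u ∈ Icc s (floorG n r), f u ≤ g u := fun u hu =>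
    floorG_kernel_le hn hβ'0.le hβ'1 (hs.trans hu.1) (hu.2.trans_lt hcr)
  have hg : IntervalIntegrable g volume s (floorG n r) :=
    (intervalIntegrable_sub_rpow _ hsr' hcr).add
      ((intervalIntegrable_sub_rpow _ hsr' hcr).const_mul _)
  have hf : IntervalIntegrable f volume s (floorG n r) := by
    refine hg.mono_fun' ?_ ((ae_restrict_mem measurableSet_uIoc).mono fun u hu => ?_)
    · exact (by have := measurable_floorG n; fun_prop : Measurable f).aestronglyMeasurable
    · have hu' := Ioc_subset_Icc_self (uIoc_of_le hsr ▸ hu)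
      exact (Real.norm_of_nonneg (floorG_kernel_nonneg hn α β' (hu'.2.trans hcr.le))).trans_le
        (hfg u hu')
  have hr_c : 0 ≤ (r - floorG n r) ^ (β' - α) := Real.rpow_nonneg (by linarith) _
  have hr_s : 0 ≤ (r - s) ^ (-α) := Real.rpow_nonneg (by linarith) _
  calc gridKernelIntegral n α β' s r = ∫ u in s..floorG n r, f u := by
        rw [gridKernelIntegral, ← integral_add_adjacent_intervals hf
          ((intervalIntegrable_congr hf_zero).2 intervalIntegrable_const),
          integral_congr_ae (ae_of_all _ hf_zero), intervalIntegral.integral_zero, add_zero]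
    _ ≤ ∫ u in s..floorG n r, g u := integral_mono_on hsr hf hg hfg
    _ = ((r - s) ^ (β' - α) - (r - floorG n r) ^ (β' - α)) / (β' - α)
          + (n : ℝ)⁻¹ ^ β' * (((r - s) ^ (-α) - (r - floorG n r) ^ (-α)) / (-α)) := by
        rw [integral_add (intervalIntegrable_sub_rpow _ hsr' hcr)
          ((intervalIntegrable_sub_rpow _ hsr' hcr).const_mul _),
          intervalIntegral.integral_const_mul, integral_sub_rpow (by linarith) hsr' hcr,
          integral_sub_rpow (by linarith) hsr' hcr]
        simp only [sub_add_cancel]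
    _ ≤ (r - s) ^ (β' - α) / (β' - α) + (n : ℝ)⁻¹ ^ β' / α * (r - floorG n r) ^ (-α) := by
        rw [div_neg, ← neg_div, neg_sub, mul_div_assoc', div_mul_eq_mul_div]
        gcongr <;> linarith

end kernel

section cells

variable {n : ℕ}

lemma integral_sub_floorG_rpow_cell (hn : 0 < n) {α : ℝ} (hα1 : α < 1) (j : ℕ) :
    IntervalIntegrable (fun r => (r - floorG n r) ^ (-α)) volume (j / n) ((j + 1) / n) ∧
      ∫ r in (j / n : ℝ)..((j + 1) / n), (r - floorG n r) ^ (-α) =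
        (n : ℝ)⁻¹ ^ (1 - α) / (1 - α) := by
  have hcell : EqOn (fun r => (r - floorG n r) ^ (-α)) (fun r => (r - j / n) ^ (-α))
      (uIoc ((j : ℝ) / n) ((j + 1) / n)) := by
    intro r hr
    rw [uIoc_of_le (by gcongr; linarith)] at hr
    simp only [floorG_eq_of_mem_Ioc hn hr]
  have hq : -1 < -α := by linarith
  refine ⟨(intervalIntegrable_congr hcell).2 (intervalIntegrable_rpow_sub hq _ _), ?_⟩
  rw [integral_congr_ae (ae_of_all _ hcell), integral_rpow_sub hq,
    show -α + 1 = 1 - α by ring, show ((j : ℝ) + 1) / n - j / n = (n : ℝ)⁻¹ by ring]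

lemma integral_sub_floorG_rpow_grid (hn : 0 < n) {α : ℝ} (hα1 : α < 1) (k m : ℕ) :
    IntervalIntegrable (fun r => (r - floorG n r) ^ (-α)) volume (k / n) ((k + m) / n) ∧
      ∫ r in (k / n : ℝ)..((k + m) / n), (r - floorG n r) ^ (-α) =
        m * ((n : ℝ)⁻¹ ^ (1 - α) / (1 - α)) := by
  have hcell (i : ℕ) := integral_sub_floorG_rpow_cell hn hα1 (k + i)
  push_cast at hcell
  simp only [add_assoc] at hcell
  constructor
  · simpa using IntervalIntegrable.trans_iterate (a := fun i : ℕ => ((k : ℝ) + i) / n) (n := m)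
      (fun i _ => by simpa using (hcell i).1)
  · have hsum := sum_integral_adjacent_intervals (a := fun i : ℕ => ((k : ℝ) + i) / n)
      (n := m) (f := fun r => (r - floorG n r) ^ (-α)) (fun i _ => by simpa using (hcell i).1)
    simp only [Nat.cast_add, Nat.cast_one, Nat.cast_zero, add_zero] at hsum
    simp [← hsum, hcell]

lemma integral_sub_floorG_rpow_le (hn : 0 < n) {α : ℝ} (hα1 : α < 1) {k : ℕ} {t : ℝ}
    (ht : (k : ℝ) / n + (n : ℝ)⁻¹ ≤ t) :
    IntervalIntegrable (fun r => (r - floorG n r) ^ (-α)) volume (k / n) t ∧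
      ∫ r in (k / n : ℝ)..t, (r - floorG n r) ^ (-α) ≤
        2 * (t - k / n) * ((n : ℝ)⁻¹ ^ (-α) / (1 - α)) := by
  have hn' : (0 : ℝ) < n := by exact_mod_cast hn
  have hs0 : (0 : ℝ) ≤ k / n := by positivity
  have hst : (k : ℝ) / n < t := by linarith [inv_pos.2 hn']
  set M := ⌈(n : ℝ) * t⌉₊
  have hkM : k ≤ M := (Nat.lt_ceil.2 ((div_lt_iff₀' hn').1 hst)).le
  have htM : t ≤ M / n := (le_div_iff₀' hn').2 (Nat.le_ceil _)
  have hMk : ((M : ℝ) - k) * (n : ℝ)⁻¹ ≤ 2 * (t - k / n) := by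
    have := Nat.ceil_lt_add_one (mul_nonneg hn'.le (hs0.trans hst.le))
    have h1 : ((M : ℝ) - k) * (n : ℝ)⁻¹ < t - k / n + (n : ℝ)⁻¹ := by
      rw [← div_eq_mul_inv, div_lt_iff₀ hn']
      field_simp
      linarith
    linarith
  obtain ⟨hint, hval⟩ := integral_sub_floorG_rpow_grid hn hα1 k (M - k)
  rw [Nat.cast_sub hkM, add_sub_cancel] at hint hval
  have hnonneg : 0 ≤ᵐ[volume.restrict (Ioc ((k : ℝ) / n) (M / n))]
      fun r => (r - floorG n r) ^ (-α) := by
    refine (ae_restrict_mem measurableSet_Ioc).mono fun r hr => ?_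
    exact Real.rpow_nonneg (sub_nonneg.2 (floorG_le_self hn (hs0.trans hr.1.le))) _
  have htM' : t ∈ uIcc ((k : ℝ) / n) (M / n) := by
    rw [uIcc_of_le (hst.le.trans htM)]
    exact ⟨hst.le, htM⟩
  refine ⟨hint.mono_set (uIcc_subset_uIcc_left htM'), ?_⟩
  calc ∫ r in (k / n : ℝ)..t, (r - floorG n r) ^ (-α)
      ≤ ∫ r in (k / n : ℝ)..(M / n), (r - floorG n r) ^ (-α) :=
        integral_mono_interval le_rfl hst.le htM hnonneg hint
    _ = ((M : ℝ) - k) * (n : ℝ)⁻¹ * ((n : ℝ)⁻¹ ^ (-α) / (1 - α)) := by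
        rw [hval, sub_eq_add_neg (1 : ℝ) α, Real.rpow_add (inv_pos.2 hn'), Real.rpow_one]
        ring
    _ ≤ 2 * (t - k / n) * ((n : ℝ)⁻¹ ^ (-α) / (1 - α)) := by
        gcongr

end cells

noncomputable def kernelConst (α β' : ℝ) : ℝ := 1 / ((β' - α) * (β' - α + 1)) + 2 / (α * (1 - α))

lemma kernelConst_pos {α β' : ℝ} (hα : 0 < α) (hα1 : α < 1) (hαβ' : α < β') :
    0 < kernelConst α β' := by
  have : 0 < β' - α := sub_pos.2 hαβ'
  have : 0 < 1 - α := sub_pos.2 hα1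
  unfold kernelConst
  positivity

lemma integral_gridKernelMajorant_le {n : ℕ} (hn : 0 < n) {α β' : ℝ} (hα : 0 < α) (hα1 : α < 1)
    (hαβ' : α < β') {k : ℕ} {t : ℝ} (ht : (k : ℝ) / n + (n : ℝ)⁻¹ ≤ t) :
    IntervalIntegrable (fun r => (r - k / n) ^ (β' - α) / (β' - α)
        + (n : ℝ)⁻¹ ^ β' / α * (r - floorG n r) ^ (-α)) volume (k / n) t ∧
      ∫ r in (k / n : ℝ)..t, ((r - k / n) ^ (β' - α) / (β' - α)
        + (n : ℝ)⁻¹ ^ β' / α * (r - floorG n r) ^ (-α)) ≤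
        kernelConst α β' * (t - k / n) ^ (β' - α + 1) := by
  set s : ℝ := k / n
  have hn' : (0 : ℝ) < n := by exact_mod_cast hn
  have hh : 0 < (n : ℝ)⁻¹ := inv_pos.2 hn'
  have hst : 0 < t - s := by linarith
  have hq : -1 < β' - α := by linarith
  obtain ⟨hg_int, hg_le⟩ := integral_sub_floorG_rpow_le hn hα1 ht
  have hp_int := (intervalIntegrable_rpow_sub hq s t).div_const (β' - α)
  refine ⟨hp_int.add (hg_int.const_mul _), ?_⟩
  have hh_le : (n : ℝ)⁻¹ ^ (β' - α) ≤ (t - s) ^ (β' - α) :=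
    Real.rpow_le_rpow hh.le (by linarith) (by linarith)
  rw [integral_add hp_int (hg_int.const_mul _), intervalIntegral.integral_div,
    intervalIntegral.integral_const_mul, integral_rpow_sub hq]
  calc (t - s) ^ (β' - α + 1) / (β' - α + 1) / (β' - α)
        + (n : ℝ)⁻¹ ^ β' / α * ∫ r in s..t, (r - floorG n r) ^ (-α)
      ≤ (t - s) ^ (β' - α + 1) / (β' - α + 1) / (β' - α)
        + (n : ℝ)⁻¹ ^ β' / α * (2 * (t - s) * ((n : ℝ)⁻¹ ^ (-α) / (1 - α))) := by gcongr
    _ = (t - s) ^ (β' - α + 1) / ((β' - α) * (β' - α + 1))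
        + 2 / (α * (1 - α)) * ((t - s) * (n : ℝ)⁻¹ ^ (β' - α)) := by
        rw [sub_eq_add_neg β' α, Real.rpow_add hh]
        field_simp
    _ ≤ (t - s) ^ (β' - α + 1) / ((β' - α) * (β' - α + 1))
        + 2 / (α * (1 - α)) * ((t - s) * (t - s) ^ (β' - α)) := by
        have : 0 < 1 - α := sub_pos.2 hα1
        gcongr
    _ = kernelConst α β' * (t - s) ^ (β' - α + 1) := by
        rw [Real.rpow_add_one hst.ne', kernelConst]
        ring

lemma integral_mul_gridKernelIntegral_eq_zero {n : ℕ} (hn : 0 < n) (φ : ℝ → ℝ) (α : ℝ)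
    {β' : ℝ} (hβ' : β' ≠ 0) {k : ℕ} {t : ℝ} (hst : (k : ℝ) / n ≤ t)
    (ht : t ≤ (k : ℝ) / n + (n : ℝ)⁻¹) :
    ∫ r in (k / n : ℝ)..t, φ r * gridKernelIntegral n α β' (k / n) r = 0 := by
  have hzero : ∀ r ∈ uIoc ((k : ℝ) / n) t, φ r * gridKernelIntegral n α β' (k / n) r = 0 := by
    intro r hr
    rw [uIoc_of_le hst] at hr
    have hcell : floorG n r = k / n :=
      floorG_eq_of_mem_Ioc hn ⟨hr.1, by rw [add_div, one_div]; linarith [hr.2]⟩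
    have hr0 : 0 < r := lt_of_le_of_lt (by positivity) hr.1
    rw [gridKernelIntegral_eq_zero hn α hβ' hr0 hr.1.le hcell.le, mul_zero]
  rw [integral_congr_ae (ae_of_all _ hzero), intervalIntegral.integral_zero]

theorem integral_mul_gridKernelIntegral_le {n : ℕ} (hn : 0 < n) {α β' γ : ℝ} (hα : 0 < α)
    (hα1 : α < 1) (hαβ' : α < β') (hβ'1 : β' ≤ 1) (hγ : 0 ≤ γ) {k : ℕ} {t : ℝ}
    (ht : (k : ℝ) / n + (n : ℝ)⁻¹ ≤ t) :
    ∫ r in (k / n : ℝ)..t, (t - r) ^ γ * gridKernelIntegral n α β' (k / n) r ≤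
      kernelConst α β' * (t - k / n) ^ (γ + (β' - α + 1)) := by
  set s : ℝ := k / n
  have hs : 0 ≤ s := by positivity
  have hst : s < t := by linarith [inv_pos.2 (Nat.cast_pos.2 hn : (0 : ℝ) < n)]
  obtain ⟨hΦ_int, hΦ⟩ := integral_gridKernelMajorant_le hn hα hα1 hαβ' ht
  set Φ : ℝ → ℝ := fun r => (r - s) ^ (β' - α) / (β' - α)
    + (n : ℝ)⁻¹ ^ β' / α * (r - floorG n r) ^ (-α)
  have hF : ∀ r ∈ Ioo s t,
      (t - r) ^ γ * gridKernelIntegral n α β' s r ≤ (t - s) ^ γ * Φ r :=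
    fun r hr => mul_le_mul
      (Real.rpow_le_rpow (by linarith [hr.2]) (by linarith [hr.1]) hγ)
      (gridKernelIntegral_le hn hα hαβ' hβ'1 hs (natCast_div_le_floorG hn hr.1) (hs.trans_lt hr.1))
      (gridKernelIntegral_nonneg hn α β' hr.1.le) (Real.rpow_nonneg (by linarith) _)
  by_cases hF_int : IntervalIntegrable
      (fun r => (t - r) ^ γ * gridKernelIntegral n α β' s r) volume s t
  · calc _ ≤ ∫ r in s..t, (t - s) ^ γ * Φ r :=
          integral_mono_on_of_le_Ioo hst.le hF_int (hΦ_int.const_mul _) hF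
      _ ≤ (t - s) ^ γ * (kernelConst α β' * (t - s) ^ (β' - α + 1)) := by
          rw [intervalIntegral.integral_const_mul]
          gcongr
      _ = kernelConst α β' * (t - s) ^ (γ + (β' - α + 1)) := by
          rw [mul_left_comm, ← Real.rpow_add (by linarith)]
  · rw [integral_undef hF_int]
    exact mul_nonneg (kernelConst_pos hα hα1 hαβ').le (Real.rpow_nonneg (by linarith) _)

theorem kernel_estimate_floor_general (α β β' : ℝ)
    (hα : α ∈ Set.Ioo (0:ℝ) 1) (hβ' : β' ∈ Set.Ioo (0:ℝ) 1)
    (h1 : β' > α) (h2 : α > 1 - β) :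
    ∃ C : ℝ, 0 < C ∧ ∀ (n : ℕ), 0 < n → ∀ (k : ℕ) (s t : ℝ), k ≤ n → s = (k : ℝ) / n →
      s < t → t ≤ 1 →
      (∫ r in s..t, (t - r) ^ (α + β - 1) *
          ∫ u in s..r, (floorG n r - floorG n u) ^ β' / (r - u) ^ (α + 1)) ≤
        C * (t - s) ^ (β + β') := by
  have hC := kernelConst_pos hα.1 hα.2 h1
  refine ⟨kernelConst α β', hC, fun n hn k s t _ hs hst _ => ?_⟩
  change ∫ r in s..t, (t - r) ^ (α + β - 1) * gridKernelIntegral n α β' s r ≤ _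
  subst hs
  rcases le_or_gt ((k : ℝ) / n + (n : ℝ)⁻¹) t with hlarge | hsmall
  · have := integral_mul_gridKernelIntegral_le hn hα.1 hα.2 h1 hβ'.2.le
      (γ := α + β - 1) (by linarith) hlarge
    rwa [show α + β - 1 + (β' - α + 1) = β + β' by ring] at this
  · rw [integral_mul_gridKernelIntegral_eq_zero hn _ α (hα.1.trans h1).ne' hst.le hsmall.le]
    exact mul_nonneg hC.le (Real.rpow_nonneg (by linarith) _)

/-- **Fractional-calculus kernel estimate with left grid projections.**
Fix `T = 1` and `n ∈ ℕ₊`. If `β' > α > 1 - β` (with `α, β, β' ∈ (0,1)`), then there is a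
constant `C = C(α, β, β')` independent of `n` such that for every grid point `s` and every
`t ∈ (s, 1]`,
`∫_s^t (t-r)^{α+β-1} ∫_s^r (⌊r⌋ₙ - ⌊u⌋ₙ)^{β'} / (r-u)^{α+1} du dr ≤ C (t-s)^{β+β'}`. -/
theorem kernel_estimate_floor (α β β' : ℝ)
    (hα : α ∈ Set.Ioo (0:ℝ) 1) (hβ : β ∈ Set.Ioo (0:ℝ) 1) (hβ' : β' ∈ Set.Ioo (0:ℝ) 1)
    (h1 : β' > α) (h2 : α > 1 - β) :
    ∃ C : ℝ, 0 < C ∧ ∀ (n : ℕ), 0 < n → ∀ (k : ℕ) (s t : ℝ), k ≤ n → s = (k : ℝ) / n →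
      s < t → t ≤ 1 →
      (∫ r in s..t, (t - r) ^ (α + β - 1) *
          ∫ u in s..r, (floorG n r - floorG n u) ^ β' / (r - u) ^ (α + 1)) ≤
        C * (t - s) ^ (β + β') :=
  kernel_estimate_floor_general α β β' hα hβ' h1 h2
end

section
/- Let $X$ be an $\mathbb{R}^d$-valued path whose sample paths are $\beta$-Hölder on $[0,T]$ for some $\beta\in(1/2,1)$, and let $V\in\mathcal{C}^1_b(\mathbb{R}^m;\mathbb{R}^{m\times d})$. For $n\in\mathbb{N}_+$ define the Euler-type scheme $Y^n_t=y+\int_0^t V(Y^n_{\lfloor s\rfloor_n})dX_s$ on the uniform grid of mesh $h=T/n$ (Young integral of a piecewise-constant integrand). Then $\|Y^n\|_\beta \le C(V,\beta,T)\max\{\|X\|_\beta,\|X\|_\beta^{1/\beta}\}$ with $C$ independent of $n$. -/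
/-!
On a grid block of `2 ^ j` steps, the Euler remainder `Y_b - Y_a - V(Y_a)(X_b - X_a)` splits
into the remainders of the two halves plus `(V(Y_c) - V(Y_a))(X_b - X_c)`, which is of order
`‖X‖_β ^ 2 h ^ (2β)` once the increment of `Y` over the first half is known to be
`O(‖X‖_β h ^ β)`. Since `2β > 1`, the recursion `R(2h) ≤ 2 R(h) + c h ^ (2β)` closes as long as
the blocks stay shorter than `τ ≈ ‖X‖_β ^ (-1/β)`. Binary expansion extends the bound to every
grid span, the explicit form of the scheme inside a cell to every span shorter than `τ`, and
cutting `[u, v]` into pieces of length at most `τ` to the whole interval, at the cost of the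
factor `(T / τ) ^ (1 - β)`; this is where the term `‖X‖_β ^ (1/β)` comes from.
-/

/-- The `β`-Hölder seminorm of `f` on `[s,t]`. -/
noncomputable def holderSemi {E : Type*} [NormedAddCommGroup E]
    (f : ℝ → E) (s t β : ℝ) : ℝ :=
  sSup {c | ∃ u v, s ≤ u ∧ u < v ∧ v ≤ t ∧ c = ‖f v - f u‖ / (v - u) ^ β}

theorem holderSemi_le {E : Type*} [NormedAddCommGroup E] {f : ℝ → E} {s t β B : ℝ} (hB : 0 ≤ B)
    (h : ∀ u v, s ≤ u → u < v → v ≤ t → ‖f v - f u‖ ≤ B * (v - u) ^ β) :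
    holderSemi f s t β ≤ B := by
  refine Real.sSup_le ?_ hB
  rintro c ⟨u, v, hu, huv, hv, rfl⟩
  rw [div_le_iff₀ (Real.rpow_pos_of_pos (sub_pos.2 huv) _)]
  exact h u v hu huv hv

open Finset in
theorem norm_sub_le_of_local_holder {E : Type*} [NormedAddCommGroup E] {f : ℝ → E}
    {a b τ A β : ℝ} (hτ : 0 < τ) (hA : 0 ≤ A) (hβ : β ≤ 1)
    (h : ∀ u v, a ≤ u → u ≤ v → v ≤ b → v - u ≤ τ → ‖f v - f u‖ ≤ A * (v - u) ^ β)
    {u v : ℝ} (hu : a ≤ u) (huv : u ≤ v) (hv : v ≤ b) :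
    ‖f v - f u‖ ≤ A * (1 + (b - a) / τ) ^ (1 - β) * (v - u) ^ β := by
  set N : ℕ := ⌊(v - u) / τ⌋₊ + 1 with hNdef
  have hN : (0 : ℝ) < N := by positivity
  have hNlt : (v - u) / τ < N := by rw [hNdef]; push_cast; exact Nat.lt_floor_add_one _
  have hNle : (N : ℝ) ≤ 1 + (b - a) / τ := by
    have := Nat.floor_le (div_nonneg (sub_nonneg.2 huv) hτ.le)
    have : (v - u) / τ ≤ (b - a) / τ := by gcongr
    rw [hNdef]; push_cast; linarith
  set w := (v - u) / N with hw
  have hw0 : 0 ≤ w := div_nonneg (sub_nonneg.2 huv) hN.le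
  have hwτ : w ≤ τ := by
    rw [div_le_iff₀ hN]; rw [div_lt_iff₀ hτ] at hNlt; linarith
  have hNw : N * w = v - u := by rw [hw]; field_simp
  set p : ℕ → ℝ := fun i => u + i * w
  have hp : ∀ i ≤ N, a ≤ p i ∧ p i ≤ b := by
    intro i hi
    have : (i : ℝ) * w ≤ N * w := by gcongr
    constructor <;> nlinarith
  have hsum : f v - f u = ∑ i ∈ range N, (f (p (i + 1)) - f (p i)) := by
    rw [sum_range_sub (fun i => f (p i))]
    simp only [p, hNw, CharP.cast_eq_zero, zero_mul, add_zero]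
    congr 2; ring
  have hstep : ∀ i ∈ range N, ‖f (p (i + 1)) - f (p i)‖ ≤ A * w ^ β := by
    intro i hi
    have hi := mem_range.1 hi
    have hpw : p (i + 1) - p i = w := by simp only [p]; push_cast; ring
    rw [← hpw]
    exact h _ _ (hp i hi.le).1 (by linarith) (hp (i + 1) hi).2 (by linarith)
  have hNpow : (N : ℝ) * w ^ β = N ^ (1 - β) * (v - u) ^ β := by
    rw [hw, Real.div_rpow (sub_nonneg.2 huv) hN.le, Real.rpow_sub hN, Real.rpow_one]
    field_simp
  calc ‖f v - f u‖ ≤ ∑ i ∈ range N, A * w ^ β := hsum ▸ norm_sum_le_of_le _ hstep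
    _ = A * (N ^ (1 - β) * (v - u) ^ β) := by
      rw [sum_const, card_range, nsmul_eq_mul, ← hNpow]; ring
    _ ≤ A * (1 + (b - a) / τ) ^ (1 - β) * (v - u) ^ β := by
      rw [← mul_assoc]
      gcongr

theorem exists_nat_mul_le_le_succ_mul {δ u : ℝ} {n : ℕ} (hδ : 0 < δ) (hn : 0 < n) (hu : 0 ≤ u)
    (hun : u ≤ n * δ) : ∃ k < n, k * δ ≤ u ∧ u ≤ (k + 1) * δ := by
  rcases hun.lt_or_eq with hlt | rfl
  · refine ⟨⌊u / δ⌋₊, (Nat.floor_lt (by positivity)).2 ((div_lt_iff₀ hδ).2 hlt), ?_, ?_⟩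
    · exact (le_div_iff₀ hδ).1 (Nat.floor_le (by positivity))
    · exact ((div_lt_iff₀ hδ).1 (Nat.lt_floor_add_one _)).le
  · refine ⟨n - 1, by omega, ?_, ?_⟩ <;> rw [Nat.cast_pred hn]
    · nlinarith
    · simp

theorem norm_sub_le_of_cell_of_grid {E : Type*} [NormedAddCommGroup E] {f : ℝ → E}
    {δ τ A B β : ℝ} {n : ℕ} (hδ : 0 < δ) (hβ : 0 ≤ β) (hA : 0 ≤ A) (hB : 0 ≤ B)
    (hcell : ∀ k < n, ∀ u v, k * δ ≤ u → u ≤ v → v ≤ (k + 1) * δ →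
      ‖f v - f u‖ ≤ A * (v - u) ^ β)
    (hgrid : ∀ a b : ℕ, a ≤ b → b ≤ n → b * δ - a * δ ≤ τ →
      ‖f (b * δ) - f (a * δ)‖ ≤ B * (b * δ - a * δ) ^ β)
    {u v : ℝ} (hu : 0 ≤ u) (huv : u ≤ v) (hv : v ≤ n * δ) (hτ : v - u ≤ τ) :
    ‖f v - f u‖ ≤ (2 * A + B) * (v - u) ^ β := by
  rcases huv.eq_or_lt with rfl | huv
  · simp only [sub_self, norm_zero]; positivity
  have hn : 0 < n := Nat.pos_of_ne_zero <| by rintro rfl; simp at hv; linarith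
  obtain ⟨k, hkn, hku, huk⟩ := exists_nat_mul_le_le_succ_mul hδ hn hu (by linarith)
  obtain ⟨l, hln, hlv, hvl⟩ := exists_nat_mul_le_le_succ_mul hδ hn (by linarith) hv
  have hmono : ∀ {t : ℝ}, 0 ≤ t → t ≤ v - u → t ^ β ≤ (v - u) ^ β :=
    fun ht0 ht => Real.rpow_le_rpow ht0 ht hβ
  by_cases hlk : l ≤ k
  · have hvk : v ≤ (k + 1) * δ := hvl.trans (by gcongr)
    calc ‖f v - f u‖ ≤ A * (v - u) ^ β := hcell k hkn u v hku huv.le hvk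
      _ ≤ (2 * A + B) * (v - u) ^ β := by gcongr; linarith
  have hkl : ((k + 1 : ℕ) : ℝ) * δ ≤ l * δ := by gcongr; exact_mod_cast (by omega : k + 1 ≤ l)
  push_cast at hkl
  have hleft := hcell k hkn u ((k + 1) * δ) hku huk le_rfl
  have hmid := hgrid (k + 1) l (by omega) hln.le (by push_cast; linarith)
  have hright := hcell l hln (l * δ) v le_rfl hlv hvl
  push_cast at hmid
  calc ‖f v - f u‖
      ≤ ‖f v - f (l * δ)‖ + ‖f (l * δ) - f ((k + 1) * δ)‖ + ‖f ((k + 1) * δ) - f u‖ := by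
        simpa only [sub_add_sub_cancel] using
          norm_add₃_le (a := f v - f (l * δ)) (b := f (l * δ) - f ((k + 1) * δ))
            (c := f ((k + 1) * δ) - f u)
    _ ≤ A * (v - u) ^ β + B * (v - u) ^ β + A * (v - u) ^ β := by
        gcongr ?_ + ?_ + ?_
        · exact hright.trans (mul_le_mul_of_nonneg_left (hmono (by linarith) (by linarith)) hA)
        · exact hmid.trans (mul_le_mul_of_nonneg_left (hmono (by linarith) (by linarith)) hB)
        · exact hleft.trans (mul_le_mul_of_nonneg_left (hmono (by linarith) (by linarith)) hA)
    _ = (2 * A + B) * (v - u) ^ β := by ring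

theorem one_sub_two_rpow_neg_pos {β : ℝ} (hβ : 0 < β) : 0 < 1 - (2 : ℝ) ^ (-β) :=
  sub_pos.2 (Real.rpow_lt_one_of_one_lt_of_neg one_lt_two (neg_lt_zero.2 hβ))

theorem norm_sub_le_of_dyadic {E : Type*} [NormedAddCommGroup E] {f : ℕ → E} {M L β : ℝ}
    {n : ℕ} (hβ : 0 < β) (hM : 0 ≤ M)
    (h : ∀ j a, a + 2 ^ j ≤ n → (2 : ℝ) ^ j ≤ L → ‖f (a + 2 ^ j) - f a‖ ≤ M * ((2 : ℝ) ^ j) ^ β)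
    (r a : ℕ) (ha : a + r ≤ n) (hr : (r : ℝ) ≤ L) :
    ‖f (a + r) - f a‖ ≤ M / (1 - 2 ^ (-β)) * (r : ℝ) ^ β := by
  have hθ := one_sub_two_rpow_neg_pos hβ
  induction r using Nat.strong_induction_on generalizing a with
  | _ r ih =>
  rcases Nat.eq_zero_or_pos r with rfl | hr0
  · simp [Real.zero_rpow hβ.ne']
  -- Split off the largest dyadic block `2 ^ j ≤ r`; the rest `r' = r - 2 ^ j` is at most `r / 2`.
  set j := Nat.log 2 r
  have hj : 2 ^ j ≤ r := Nat.pow_log_le_self 2 hr0.ne'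
  have hj' : r < 2 ^ (j + 1) := Nat.lt_pow_succ_log_self (by norm_num) r
  set r' := r - 2 ^ j
  have hr'2 : r' * 2 ≤ r := by rw [pow_succ] at hj'; omega
  have hr'r : (r' : ℝ) ≤ r / 2 := by rw [le_div_iff₀ two_pos]; exact_mod_cast hr'2
  have hjr : (2 : ℝ) ^ j ≤ r := by exact_mod_cast hj
  have hsplit : a + r = a + 2 ^ j + r' := by omega
  have hrest := ih r' (by omega) (a + 2 ^ j) (by omega)
    ((Nat.cast_le.2 (Nat.sub_le r _)).trans hr)
  have hhead := h j a (by omega) (hjr.trans hr)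
  have hhalf : (r' : ℝ) ^ β ≤ 2 ^ (-β) * (r : ℝ) ^ β := by
    calc (r' : ℝ) ^ β ≤ ((r : ℝ) / 2) ^ β := Real.rpow_le_rpow (by positivity) hr'r hβ.le
      _ = 2 ^ (-β) * (r : ℝ) ^ β := by
        rw [Real.div_rpow (by positivity) zero_le_two, Real.rpow_neg zero_le_two]; ring
  calc ‖f (a + r) - f a‖ ≤ ‖f (a + 2 ^ j + r') - f (a + 2 ^ j)‖ + ‖f (a + 2 ^ j) - f a‖ := by
        rw [hsplit]; exact norm_sub_le_norm_sub_add_norm_sub _ _ _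
    _ ≤ M / (1 - 2 ^ (-β)) * (2 ^ (-β) * (r : ℝ) ^ β) + M * (r : ℝ) ^ β := by
        gcongr
        · exact hrest.trans (by gcongr)
        · exact hhead.trans (by gcongr)
    _ = M / (1 - 2 ^ (-β)) * (r : ℝ) ^ β := by
        field_simp [hθ.ne']; ring

theorem two_lt_two_rpow_two_mul {β : ℝ} (hβ : 1 / 2 < β) : 2 < (2 : ℝ) ^ (2 * β) := by
  simpa using Real.rpow_lt_rpow_of_exponent_lt one_lt_two (by linarith : (1 : ℝ) < 2 * β)

section Euler

variable {E F : Type*} [NormedAddCommGroup E] [NormedSpace ℝ E] [NormedAddCommGroup F]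
  [NormedSpace ℝ F] {V : E → F →L[ℝ] E} {x : ℕ → F} {y : ℕ → E} {X : ℝ → F} {Y : ℝ → E}
  {A ρ K δ β : ℝ} {n : ℕ}

def eulerRemainder (V : E → F →L[ℝ] E) (x : ℕ → F) (y : ℕ → E) (a b : ℕ) : E :=
  y b - y a - V (y a) (x b - x a)

theorem norm_sub_le_of_norm_eulerRemainder_le (hVb : ∀ z, ‖V z‖ ≤ A)
    (hx : ∀ a r, a + r ≤ n → ‖x (a + r) - x a‖ ≤ ρ * (r : ℝ) ^ β) (hβ : 0 ≤ β) {D L : ℝ}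
    (hD0 : 0 ≤ D) (hDL : D * L ^ β ≤ A * ρ) {a r : ℕ} (ha : a + r ≤ n) (hr : (r : ℝ) ≤ L)
    (hR : ‖eulerRemainder V x y a (a + r)‖ ≤ D * (r : ℝ) ^ (2 * β)) :
    ‖y (a + r) - y a‖ ≤ 2 * A * ρ * (r : ℝ) ^ β := by
  have hA : 0 ≤ A := (norm_nonneg _).trans (hVb 0)
  have hrβ : 0 ≤ (r : ℝ) ^ β := by positivity
  have hR' : D * (r : ℝ) ^ (2 * β) ≤ A * ρ * (r : ℝ) ^ β := by
    rw [mul_comm 2 β, Real.rpow_mul (Nat.cast_nonneg r), Real.rpow_two, sq, ← mul_assoc]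
    refine mul_le_mul_of_nonneg_right ?_ hrβ
    exact (mul_le_mul_of_nonneg_left (Real.rpow_le_rpow (Nat.cast_nonneg r) hr hβ) hD0).trans hDL
  calc ‖y (a + r) - y a‖
      = ‖eulerRemainder V x y a (a + r) + V (y a) (x (a + r) - x a)‖ := by
        rw [eulerRemainder, sub_add_cancel]
    _ ≤ ‖eulerRemainder V x y a (a + r)‖ + ‖V (y a)‖ * ‖x (a + r) - x a‖ := by
        grw [norm_add_le, (V (y a)).le_opNorm]
    _ ≤ A * ρ * (r : ℝ) ^ β + A * (ρ * (r : ℝ) ^ β) := by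
        gcongr; exacts [hR.trans hR', hVb _, hx a r ha]
    _ = 2 * A * ρ * (r : ℝ) ^ β := by ring

theorem eulerRemainder_add_eq (a b c : ℕ) :
    eulerRemainder V x y a c = eulerRemainder V x y a b + eulerRemainder V x y b c
      + (V (y b) - V (y a)) (x c - x b) := by
  simp only [eulerRemainder, map_sub, sub_apply]
  abel

theorem norm_eulerRemainder_dyadic_le (hVb : ∀ z, ‖V z‖ ≤ A)
    (hVlip : ∀ z w, ‖V z - V w‖ ≤ A * ‖z - w‖)
    (hy : ∀ k < n, y (k + 1) = y k + V (y k) (x (k + 1) - x k))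
    (hx : ∀ a r, a + r ≤ n → ‖x (a + r) - x a‖ ≤ ρ * (r : ℝ) ^ β) (hβ : 0 ≤ β) {D L : ℝ}
    (hD0 : 0 ≤ D) (hD : 2 * A ^ 2 * ρ ^ 2 ≤ D * (2 ^ (2 * β) - 2)) (hDL : D * L ^ β ≤ A * ρ)
    (j a : ℕ) (ha : a + 2 ^ j ≤ n) (hj : (2 : ℝ) ^ j ≤ L) :
    ‖eulerRemainder V x y a (a + 2 ^ j)‖ ≤ D * ((2 : ℝ) ^ j) ^ (2 * β) := by
  induction j generalizing a with
  | zero =>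
    rw [pow_zero, eulerRemainder, hy a (by omega)]
    simpa using hD0
  | succ j ih =>
    set s : ℝ := 2 ^ j
    have hs0 : 0 ≤ s := by positivity
    have hsL : s ≤ L := (pow_le_pow_right₀ one_le_two j.le_succ).trans hj
    have hsplit : a + 2 ^ (j + 1) = a + 2 ^ j + 2 ^ j := by rw [pow_succ]; ring
    rw [hsplit] at ha
    have ha' : a + 2 ^ j ≤ n := (Nat.le_add_right _ _).trans ha
    have hleft := ih a ha' hsL
    have hright := ih (a + 2 ^ j) ha hsL
    have hinc : ‖y (a + 2 ^ j) - y a‖ ≤ 2 * A * ρ * s ^ β := by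
      have := norm_sub_le_of_norm_eulerRemainder_le (y := y) hVb hx hβ hD0 hDL (a := a) (r := 2 ^ j)
        ha' (by push_cast; exact hsL) (by push_cast; exact hleft)
      push_cast at this
      exact this
    have hdx : ‖x (a + 2 ^ j + 2 ^ j) - x (a + 2 ^ j)‖ ≤ ρ * s ^ β := by
      have := hx (a + 2 ^ j) (2 ^ j) ha
      push_cast at this
      exact this
    have hcross : ‖(V (y (a + 2 ^ j)) - V (y a)) (x (a + 2 ^ j + 2 ^ j) - x (a + 2 ^ j))‖
        ≤ 2 * A ^ 2 * ρ ^ 2 * s ^ (2 * β) := by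
      have hA : 0 ≤ A := (norm_nonneg _).trans (hVb 0)
      calc _ ≤ ‖V (y (a + 2 ^ j)) - V (y a)‖ * ‖x (a + 2 ^ j + 2 ^ j) - x (a + 2 ^ j)‖ :=
            ContinuousLinearMap.le_opNorm _ _
        _ ≤ A * (2 * A * ρ * s ^ β) * (ρ * s ^ β) :=
            mul_le_mul ((hVlip _ _).trans (mul_le_mul_of_nonneg_left hinc hA)) hdx
              (norm_nonneg _) (mul_nonneg hA ((norm_nonneg _).trans hinc))
        _ = 2 * A ^ 2 * ρ ^ 2 * s ^ (2 * β) := by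
            rw [mul_comm 2 β, Real.rpow_mul hs0, Real.rpow_two]; ring
    calc ‖eulerRemainder V x y a (a + 2 ^ (j + 1))‖
        ≤ D * s ^ (2 * β) + D * s ^ (2 * β) + 2 * A ^ 2 * ρ ^ 2 * s ^ (2 * β) := by
          rw [hsplit, eulerRemainder_add_eq a (a + 2 ^ j)]
          exact norm_add₃_le.trans (add_le_add_three hleft hright hcross)
      _ ≤ D * 2 ^ (2 * β) * s ^ (2 * β) := by
          nlinarith [mul_le_mul_of_nonneg_right hD (by positivity : 0 ≤ s ^ (2 * β))]
      _ = D * ((2 : ℝ) ^ (j + 1)) ^ (2 * β) := by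
          rw [pow_succ, Real.mul_rpow hs0 zero_le_two]; ring

theorem norm_sub_le_of_eulerRecursion (hVb : ∀ z, ‖V z‖ ≤ A)
    (hVlip : ∀ z w, ‖V z - V w‖ ≤ A * ‖z - w‖)
    (hy : ∀ k < n, y (k + 1) = y k + V (y k) (x (k + 1) - x k))
    (hx : ∀ a r, a + r ≤ n → ‖x (a + r) - x a‖ ≤ ρ * (r : ℝ) ^ β) (hβ : 1 / 2 < β) (hρ : 0 ≤ ρ)
    {L : ℝ} (hL : 2 * A * ρ * L ^ β ≤ 2 ^ (2 * β) - 2) (r a : ℕ) (ha : a + r ≤ n)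
    (hr : (r : ℝ) ≤ L) :
    ‖y (a + r) - y a‖ ≤ 2 * A * ρ / (1 - 2 ^ (-β)) * (r : ℝ) ^ β := by
  have hβ0 : 0 < β := by linarith
  have hA : 0 ≤ A := (norm_nonneg _).trans (hVb 0)
  have hden : 0 < (2 : ℝ) ^ (2 * β) - 2 := sub_pos.2 (two_lt_two_rpow_two_mul hβ)
  set D := 2 * A ^ 2 * ρ ^ 2 / (2 ^ (2 * β) - 2)
  have hD0 : 0 ≤ D := div_nonneg (by positivity) hden.le
  have hD : 2 * A ^ 2 * ρ ^ 2 ≤ D * (2 ^ (2 * β) - 2) := (div_mul_cancel₀ _ hden.ne').ge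
  have hDL : D * L ^ β ≤ A * ρ :=
    calc D * L ^ β = A * ρ * (2 * A * ρ * L ^ β / (2 ^ (2 * β) - 2)) := by ring
      _ ≤ A * ρ * 1 := by gcongr; exact (div_le_one hden).2 hL
      _ = A * ρ := mul_one _
  refine norm_sub_le_of_dyadic hβ0 (by positivity) (fun j a ha hj => ?_) r a ha hr
  have := norm_sub_le_of_norm_eulerRemainder_le hVb hx hβ0.le hD0 hDL (a := a) (r := 2 ^ j) ha
    (by push_cast; exact hj)
    (by push_cast; exact norm_eulerRemainder_dyadic_le hVb hVlip hy hx hβ0.le hD0 hD hDL j a ha hj)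
  push_cast at this
  exact this

def IsEulerScheme (V : E → F →L[ℝ] E) (X : ℝ → F) (Y : ℝ → E) (δ : ℝ) (n : ℕ) : Prop :=
  ∀ k < n, ∀ u, k * δ ≤ u → u ≤ (k + 1) * δ → Y u = Y (k * δ) + V (Y (k * δ)) (X u - X (k * δ))

namespace IsEulerScheme

theorem norm_sub_le_of_mem_cell (hS : IsEulerScheme V X Y δ n) (hδ : 0 ≤ δ)
    (hVb : ∀ z, ‖V z‖ ≤ A) (hK : 0 ≤ K)
    (hX : ∀ u v, 0 ≤ u → u < v → v ≤ n * δ → ‖X v - X u‖ ≤ K * (v - u) ^ β)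
    {k : ℕ} (hk : k < n) {u v : ℝ} (hu : k * δ ≤ u) (huv : u ≤ v) (hv : v ≤ (k + 1) * δ) :
    ‖Y v - Y u‖ ≤ A * K * (v - u) ^ β := by
  have hA : 0 ≤ A := (norm_nonneg _).trans (hVb 0)
  rcases huv.eq_or_lt with rfl | huv
  · simp only [sub_self, norm_zero]; positivity
  have hvn : v ≤ n * δ := hv.trans (by gcongr; exact_mod_cast hk)
  have hYX : Y v - Y u = V (Y (k * δ)) (X v - X u) := by
    rw [hS k hk u hu (huv.le.trans hv), hS k hk v (hu.trans huv.le) hv]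
    simp only [map_sub]; abel
  rw [hYX, mul_assoc]
  exact ((V _).le_opNorm _).trans (mul_le_mul (hVb _)
    (hX u v ((by positivity : (0 : ℝ) ≤ k * δ).trans hu) huv hvn) (norm_nonneg _) hA)

theorem norm_sub_grid_le (hS : IsEulerScheme V X Y δ n) (hδ : 0 < δ)
    (hVb : ∀ z, ‖V z‖ ≤ A) (hVlip : ∀ z w, ‖V z - V w‖ ≤ A * ‖z - w‖) (hK : 0 ≤ K)
    (hX : ∀ u v, 0 ≤ u → u < v → v ≤ n * δ → ‖X v - X u‖ ≤ K * (v - u) ^ β)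
    (hβ : 1 / 2 < β) {τ : ℝ} (hτ : 0 ≤ τ) (hτK : 2 * A * K * τ ^ β ≤ 2 ^ (2 * β) - 2)
    {a b : ℕ} (hab : a ≤ b) (hb : b ≤ n) (hτab : b * δ - a * δ ≤ τ) :
    ‖Y (b * δ) - Y (a * δ)‖ ≤ 2 * A / (1 - 2 ^ (-β)) * K * (b * δ - a * δ) ^ β := by
  have hβ0 : 0 < β := by linarith
  obtain ⟨r, rfl⟩ := Nat.exists_eq_add_of_le hab
  have hgap : ∀ a r : ℕ, ((a + r : ℕ) : ℝ) * δ - a * δ = r * δ := fun a r => by push_cast; ring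
  have hy : ∀ k < n, Y ((k + 1 : ℕ) * δ)
      = Y (k * δ) + V (Y (k * δ)) (X ((k + 1 : ℕ) * δ) - X (k * δ)) := fun k hk => by
    push_cast; exact hS k hk _ (by gcongr; linarith) le_rfl
  have hx : ∀ a r : ℕ, a + r ≤ n →
      ‖X ((a + r : ℕ) * δ) - X (a * δ)‖ ≤ K * δ ^ β * (r : ℝ) ^ β := by
    intro a r har
    rcases Nat.eq_zero_or_pos r with rfl | hr
    · simp only [add_zero, sub_self, norm_zero]; positivity
    have hlt : (a : ℝ) * δ < ((a + r : ℕ) : ℝ) * δ := by gcongr; omega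
    have := hX _ _ (by positivity) hlt (by gcongr)
    rwa [hgap, Real.mul_rpow (by positivity) hδ.le, mul_comm ((r : ℝ) ^ β), ← mul_assoc] at this
  have hL : 2 * A * (K * δ ^ β) * (τ / δ) ^ β ≤ 2 ^ (2 * β) - 2 :=
    calc 2 * A * (K * δ ^ β) * (τ / δ) ^ β = 2 * A * K * τ ^ β := by
          rw [Real.div_rpow hτ hδ.le]; field_simp
      _ ≤ 2 ^ (2 * β) - 2 := hτK
  have hr : (r : ℝ) ≤ τ / δ := by rw [le_div_iff₀ hδ, ← hgap]; exact hτab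
  have := norm_sub_le_of_eulerRecursion (y := fun k => Y (k * δ)) (x := fun k => X (k * δ))
    hVb hVlip hy hx hβ (by positivity) hL r a hb hr
  rw [hgap, Real.mul_rpow (by positivity) hδ.le]
  convert this using 1
  ring

theorem norm_sub_le (hS : IsEulerScheme V X Y δ n) (hδ : 0 < δ)
    (hVb : ∀ z, ‖V z‖ ≤ A) (hVlip : ∀ z w, ‖V z - V w‖ ≤ A * ‖z - w‖) (hK : 0 ≤ K)
    (hX : ∀ u v, 0 ≤ u → u < v → v ≤ n * δ → ‖X v - X u‖ ≤ K * (v - u) ^ β)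
    (hβ : 1 / 2 < β) (hβ1 : β ≤ 1) {τ : ℝ} (hτ : 0 < τ)
    (hτK : 2 * A * K * τ ^ β ≤ 2 ^ (2 * β) - 2) {u v : ℝ} (hu : 0 ≤ u) (huv : u ≤ v)
    (hv : v ≤ n * δ) :
    ‖Y v - Y u‖
      ≤ (2 * A + 2 * A / (1 - 2 ^ (-β))) * K * (1 + n * δ / τ) ^ (1 - β) * (v - u) ^ β := by
  have hA : 0 ≤ A := (norm_nonneg _).trans (hVb 0)
  have hθ : 0 ≤ 2 * A / (1 - 2 ^ (-β)) :=
    div_nonneg (by positivity) (one_sub_two_rpow_neg_pos (by linarith)).le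
  have := norm_sub_le_of_local_holder (a := 0) (b := n * δ) (f := Y)
    (A := (2 * A + 2 * A / (1 - 2 ^ (-β))) * K) hτ (by positivity) hβ1
    (fun u v hu huv hv hvu => (norm_sub_le_of_cell_of_grid hδ (by linarith) (mul_nonneg hA hK)
      (mul_nonneg hθ hK)
      (fun k hk u v => hS.norm_sub_le_of_mem_cell hδ.le hVb hK hX hk)
      (fun a b hab hb hτab => hS.norm_sub_grid_le hδ hVb hVlip hK hX hβ hτ.le hτK hab hb hτab)
      hu huv hv hvu).trans_eq (by ring)) hu huv hv
  rwa [sub_zero] at this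

end IsEulerScheme

end Euler

theorem exists_bootstrap_scale {a b T β K : ℝ} (ha : 0 ≤ a) (hb : 0 < b) (hT : 0 < T)
    (hβ0 : 0 < β) (hβ1 : β ≤ 1) (hK : 0 ≤ K) :
    ∃ τ > 0, a * K * τ ^ β ≤ b ∧
      K * (1 + T / τ) ^ (1 - β)
        ≤ (2 + ((a / b) ^ (1 / β) * T) ^ (1 - β)) * max K (K ^ (1 / β)) := by
  set κ := K ^ (1 / β) with hκ
  set c := (a / b) ^ (1 / β) with hc
  have hκ0 : 0 ≤ κ := by positivity
  have hc0 : 0 ≤ c := by positivity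
  have hKκ : K = κ ^ β := by rw [hκ, one_div, Real.rpow_inv_rpow hK hβ0.ne']
  have hab : a / b = c ^ β := by rw [hc, one_div, Real.rpow_inv_rpow (by positivity) hβ0.ne']
  have hz : 0 ≤ c * T * κ := by positivity
  -- `τ` is comparable to `min T (K ^ (-1/β) / c)`.
  refine ⟨T / (1 + c * T * κ), by positivity, ?_, ?_⟩
  · rw [← div_le_one hb, mul_assoc, mul_div_right_comm, hab, hKκ, ← mul_assoc,
      ← Real.mul_rpow hc0 hκ0, ← Real.mul_rpow (by positivity) (by positivity)]
    refine Real.rpow_le_one (by positivity) ?_ hβ0.le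
    rw [mul_div_assoc', div_le_one (by positivity)]
    linarith
  · have hTτ : 1 + T / (T / (1 + c * T * κ)) = 2 + c * T * κ := by field_simp; ring
    have hκκ : κ ^ β * κ ^ (1 - β) = κ := by
      rw [← Real.rpow_add' hκ0 (by norm_num), add_sub_cancel, Real.rpow_one]
    have h2 : (2 : ℝ) ^ (1 - β) ≤ 2 := by
      simpa using Real.rpow_le_rpow_of_exponent_le one_le_two (by linarith : 1 - β ≤ 1)
    calc K * (1 + T / (T / (1 + c * T * κ))) ^ (1 - β)
        ≤ K * (2 ^ (1 - β) + (c * T * κ) ^ (1 - β)) := by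
          rw [hTτ]
          gcongr
          exact Real.rpow_add_le_add_rpow zero_le_two hz (by linarith) (by linarith)
      _ ≤ K * (2 + (c * T) ^ (1 - β) * κ ^ (1 - β)) := by
          rw [Real.mul_rpow (by positivity) hκ0]
          gcongr
      _ = 2 * K + (c * T) ^ (1 - β) * κ := by
          rw [hKκ]
          linear_combination (c * T) ^ (1 - β) * hκκ
      _ ≤ (2 + (c * T) ^ (1 - β)) * max K κ := by
          rw [add_mul]
          gcongr
          exacts [le_max_left _ _, le_max_right _ _]

/-- **A priori Hölder bound, uniform in `n`, for the Euler scheme (`N = 1`).**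
Let `X` be `β`-Hölder on `[0,T]` with `β ∈ (1/2,1)` and `V ∈ C¹_b(ℝ^m; ℝ^{m×d})`. For the
Euler-type scheme `Y^n_t = y + ∫_0^t V(Y^n_{⌊s⌋ₙ}) dX_s` on the uniform grid of mesh
`h = T/n` (so `Y^n_t = Y^n_{t_k} + V(Y^n_{t_k})(X_t - X_{t_k})` on each grid cell),
one has `‖Y^n‖_β ≤ C(V,β,T) max{‖X‖_β, ‖X‖_β^{1/β}}` with `C` independent of `n`. -/
theorem euler_scheme_apriori_holder_bound
    (m d : ℕ) (β T : ℝ) (hβ : β ∈ Set.Ioo (1/2 : ℝ) 1) (hT : 0 < T)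
    (V : (Fin m → ℝ) → ((Fin d → ℝ) →L[ℝ] (Fin m → ℝ))) (Cv : ℝ)
    (hVdiff : Differentiable ℝ V)
    (hVb : ∀ y, ‖V y‖ ≤ Cv ∧ ‖fderiv ℝ V y‖ ≤ Cv) :
    ∃ C : ℝ, 0 < C ∧ ∀ (n : ℕ), 0 < n →
      ∀ (X : ℝ → (Fin d → ℝ)) (Y : ℝ → (Fin m → ℝ)) (y : Fin m → ℝ) (K : ℝ), 0 ≤ K →
      (∀ u v : ℝ, 0 ≤ u → u < v → v ≤ T → ‖X v - X u‖ ≤ K * (v - u) ^ β) →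
      Y 0 = y →
      (∀ k : ℕ, k < n → ∀ u : ℝ, (k : ℝ) * T / n ≤ u → u ≤ ((k : ℝ) + 1) * T / n →
        Y u = Y ((k : ℝ) * T / n) + V (Y ((k : ℝ) * T / n)) (X u - X ((k : ℝ) * T / n))) →
      holderSemi Y 0 T β ≤ C * max K (K ^ (1 / β)) := by
  obtain ⟨hβ1, hβ2⟩ := hβ
  have hCv : 0 ≤ Cv := (norm_nonneg _).trans (hVb 0).1
  have hVlip : ∀ z w, ‖V z - V w‖ ≤ Cv * ‖z - w‖ := fun z w =>
    convex_univ.norm_image_sub_le_of_norm_fderiv_le (fun x _ => hVdiff x)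
      (fun x _ => (hVb x).2) (Set.mem_univ w) (Set.mem_univ z)
  have hden : 0 < (2 : ℝ) ^ (2 * β) - 2 := sub_pos.2 (two_lt_two_rpow_two_mul hβ1)
  have hθ := one_sub_two_rpow_neg_pos (β := β) (by linarith)
  set B := 2 * Cv + 2 * Cv / (1 - 2 ^ (-β))
  set C₀ := 2 + ((2 * Cv / (2 ^ (2 * β) - 2)) ^ (1 / β) * T) ^ (1 - β)
  refine ⟨(B + 1) * C₀, by positivity, fun n hn X Y y K hK hX _ hY => ?_⟩
  set δ := T / n
  have hδ : 0 < δ := by positivity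
  have hnδ : n * δ = T := mul_div_cancel₀ T (by positivity)
  have hS : IsEulerScheme V X Y δ n := fun k hk u h1 h2 => by
    simpa only [mul_div_assoc] using hY k hk u (by rwa [mul_div_assoc]) (by rwa [mul_div_assoc])
  obtain ⟨τ, hτ, hτK, hτT⟩ :=
    exists_bootstrap_scale (a := 2 * Cv) (by positivity) hden hT (by linarith) hβ2.le hK
  rw [← hnδ] at hX
  refine holderSemi_le (by positivity) fun u v hu huv hv => ?_
  calc ‖Y v - Y u‖ ≤ B * (K * (1 + n * δ / τ) ^ (1 - β)) * (v - u) ^ β := by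
        rw [← mul_assoc]
        exact hS.norm_sub_le hδ (fun z => (hVb z).1) hVlip hK hX hβ1 hβ2.le hτ hτK hu huv.le
          (hnδ ▸ hv)
    _ ≤ (B + 1) * C₀ * max K (K ^ (1 / β)) * (v - u) ^ β := by
        rw [hnδ, mul_assoc (B + 1)]
        gcongr
        linarith
end

section
/- Let $p\ge 1$ and let $f$ be a stochastic process on $[0,T]$ with $\sup\{\|f_v-f_u\|_{L^{2p}(\Omega)}/(v-u)^\beta : 0\le u<v\le T\}<\infty$ for some $\beta\in(1/2,1)$ and $\sup_t\|f_t\|_{L^{2p}}<\infty$. Suppose $\{g_n\}$ are processes of the form $g_n(t_i)=\sum_{k=0}^{i-1}\xi_{n,k}$ on the uniform grid $t_k=kT/n$ satisfying $\|g_n(t_j)-g_n(t_i)\|_{L^{2p}(\Omega)}\le C|t_j-t_i|^{1/2}$ for all grid points $t_i<t_j$, with $C$ independent of $n$. Then $\|\sum_{k=i}^{j-1} f_{t_k}\xi_{n,k}\|_{L^p(\Omega)}\le C'|t_j-t_i|^{1/2}$ for all grid points, with $C'=C'(p,f)$ independent of $n$. -/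
/-!
Split the weighted sum over `[i, i + m)` into the frozen-weight term `w_i ∑ ξ_k` and the
remainder `R(i, m) = ∑ (w_k - w_i) ξ_k`. The remainder obeys the Chen-type relation
`R(i, a + b) = R(i, a) + R(i + a, b) + (w_{i+a} - w_i) ∑_{[i+a, i+a+b)} ξ_k`, and Hölder's
inequality `L^{2p} × L^{2p} → L^p` bounds the defect by `((a + b) h)^{β + 1/2}`, `h = T / n`.
Since `β + 1/2 > 1`, splitting intervals in halves (a discrete sewing lemma) sums these
defects to `‖R(i, m)‖_p ≲ (m h)^{β + 1/2} ≤ T^β (m h)^{1/2}`, uniformly in `n`; the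
frozen-weight term is `O((m h)^{1/2})` by Hölder directly.
-/

open MeasureTheory Finset
open scoped ENNReal

theorem rpow_add_rpow_le_mul_rpow_add {a b c θ : ℝ} (ha : 0 ≤ a) (hb : 0 ≤ b) (hc : 0 ≤ c)
    (hac : a ≤ c * (a + b)) (hbc : b ≤ c * (a + b)) (hθ : 1 ≤ θ) :
    a ^ θ + b ^ θ ≤ c ^ (θ - 1) * (a + b) ^ θ := by
  have hab : 0 ≤ a + b := add_nonneg ha hb
  have split : ∀ x : ℝ, 0 ≤ x → x ^ θ = x * x ^ (θ - 1) := fun x hx => by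
    rw [← Real.rpow_one_add' hx (by linarith), add_sub_cancel]
  calc a ^ θ + b ^ θ = a * a ^ (θ - 1) + b * b ^ (θ - 1) := by rw [split a ha, split b hb]
    _ ≤ a * (c * (a + b)) ^ (θ - 1) + b * (c * (a + b)) ^ (θ - 1) := by gcongr
    _ = c ^ (θ - 1) * (a + b) ^ θ := by rw [Real.mul_rpow hc hab, split _ hab]; ring

theorem discrete_sewing_le {n : ℕ} {r : ℕ → ℕ → ℝ≥0∞} {B θ : ℝ} (hB : 0 ≤ B) (hθ : 1 < θ)
    (h₀ : ∀ i, r i 0 = 0) (h₁ : ∀ i, r i 1 = 0)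
    (hsplit : ∀ i a b, 1 ≤ a → 1 ≤ b → i + a + b ≤ n →
      r i (a + b) ≤ r i a + r (i + a) b + ENNReal.ofReal (B * ((a + b : ℕ) : ℝ) ^ θ))
    {i m : ℕ} (him : i + m ≤ n) :
    r i m ≤ ENNReal.ofReal (B / (1 - (2 / 3) ^ (θ - 1)) * (m : ℝ) ^ θ) := by
  set ρ : ℝ := (2 / 3) ^ (θ - 1)
  have hρ : ρ < 1 := Real.rpow_lt_one (by norm_num) (by norm_num) (by linarith)
  set A := B / (1 - ρ)
  have hA : 0 ≤ A := div_nonneg hB (by linarith)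
  have hAρ : A * ρ + B = A := by
    have : 1 - ρ ≠ 0 := by linarith
    simp only [A]; field_simp; ring
  induction m using Nat.strong_induction_on generalizing i with
  | _ m ih =>
  rcases (show m = 0 ∨ m = 1 ∨ 2 ≤ m by omega) with rfl | rfl | hm
  · simp [h₀]
  · simp [h₁]
  -- Both halves are at most `2/3` of the whole, so by `θ > 1` their bounds add up to `ρ A m^θ`.
  obtain ⟨a, b, rfl, hb, hba, ha⟩ : ∃ a b, m = a + b ∧ 1 ≤ b ∧ b ≤ a ∧ 3 * a ≤ 2 * (a + b) :=
    ⟨m - m / 2, m / 2, by omega, by omega, by omega, by omega⟩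
  have hhalves : (a : ℝ) ^ θ + (b : ℝ) ^ θ ≤ ρ * ((a + b : ℕ) : ℝ) ^ θ := by
    push_cast
    refine rpow_add_rpow_le_mul_rpow_add (by positivity) (by positivity) (by norm_num) ?_ ?_ hθ.le
    · have : (3 * a : ℝ) ≤ 2 * (a + b) := by exact_mod_cast ha
      linarith
    · have : (3 * b : ℝ) ≤ 2 * (a + b) := by exact_mod_cast (by omega : 3 * b ≤ 2 * (a + b))
      linarith
  calc r i (a + b) ≤ r i a + r (i + a) b + ENNReal.ofReal (B * ((a + b : ℕ) : ℝ) ^ θ) :=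
        hsplit i a b (by omega) hb (by omega)
    _ ≤ ENNReal.ofReal (A * (a : ℝ) ^ θ) + ENNReal.ofReal (A * (b : ℝ) ^ θ)
          + ENNReal.ofReal (B * ((a + b : ℕ) : ℝ) ^ θ) := by
        gcongr
        · exact ih a (by omega) (by omega)
        · exact ih b (by omega) (by omega)
    _ = ENNReal.ofReal (A * ((a : ℝ) ^ θ + (b : ℝ) ^ θ) + B * ((a + b : ℕ) : ℝ) ^ θ) := by
        rw [← ENNReal.ofReal_add (by positivity) (by positivity),
          ← ENNReal.ofReal_add (by positivity) (by positivity), mul_add]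
    _ ≤ ENNReal.ofReal (A * ((a + b : ℕ) : ℝ) ^ θ) := by
        gcongr
        calc A * ((a : ℝ) ^ θ + (b : ℝ) ^ θ) + B * ((a + b : ℕ) : ℝ) ^ θ
            ≤ A * (ρ * ((a + b : ℕ) : ℝ) ^ θ) + B * ((a + b : ℕ) : ℝ) ^ θ := by gcongr
          _ = A * ((a + b : ℕ) : ℝ) ^ θ := by linear_combination ((a + b : ℕ) : ℝ) ^ θ * hAρ

theorem ENNReal.holderTriple_two_mul (p : ℝ≥0∞) : ENNReal.HolderTriple (2 * p) (2 * p) p :=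
  ⟨by rw [ENNReal.mul_inv (by simp) (by simp), ← two_mul, ← mul_assoc,
    ENNReal.mul_inv_cancel two_ne_zero ENNReal.ofNat_ne_top, one_mul]⟩

theorem eLpNorm_mul_le_mul_eLpNorm_two_mul {Ω : Type*} [MeasurableSpace Ω] {μ : Measure Ω}
    {X Y : Ω → ℝ} (hX : AEStronglyMeasurable X μ) (hY : AEStronglyMeasurable Y μ) (p : ℝ≥0∞) :
    eLpNorm (fun ω => X ω * Y ω) p μ ≤ eLpNorm X (2 * p) μ * eLpNorm Y (2 * p) μ := by
  have h := eLpNorm_smul_le_mul_eLpNorm (hpqr := ENNReal.holderTriple_two_mul p) hY hX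
  exact h

section WeightedSum

variable {Ω : Type*} (w ξ : ℕ → Ω → ℝ)

def weightedSumRemainder (i m : ℕ) (ω : Ω) : ℝ :=
  ∑ k ∈ Ico i (i + m), (w k ω - w i ω) * ξ k ω

@[simp]
theorem weightedSumRemainder_zero (i : ℕ) : weightedSumRemainder w ξ i 0 = 0 := by
  ext ω; simp [weightedSumRemainder]

@[simp]
theorem weightedSumRemainder_one (i : ℕ) : weightedSumRemainder w ξ i 1 = 0 := by
  ext ω; simp [weightedSumRemainder]

theorem weightedSumRemainder_add (i a b : ℕ) :
    weightedSumRemainder w ξ i (a + b) = fun ω => weightedSumRemainder w ξ i a ω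
      + weightedSumRemainder w ξ (i + a) b ω
      + (w (i + a) ω - w i ω) * ∑ k ∈ Ico (i + a) (i + a + b), ξ k ω := by
  ext ω
  simp only [weightedSumRemainder, mul_sum, add_assoc, ← sum_add_distrib]
  rw [← sum_Ico_consecutive _ (Nat.le_add_right i a) (by omega : i + a ≤ i + (a + b)),
    ← add_assoc i a b]
  congr 1
  exact sum_congr rfl fun k _ => by ring

theorem sum_mul_eq_weightedSumRemainder_add (i m : ℕ) :
    (fun ω => ∑ k ∈ Ico i (i + m), w k ω * ξ k ω) = fun ω =>
      weightedSumRemainder w ξ i m ω + w i ω * ∑ k ∈ Ico i (i + m), ξ k ω := by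
  ext ω
  simp only [weightedSumRemainder, mul_sum, ← sum_add_distrib]
  exact sum_congr rfl fun k _ => by ring

end WeightedSum

section LpBounds

variable {Ω : Type*} [MeasurableSpace Ω] {μ : Measure Ω} {w ξ : ℕ → Ω → ℝ} {p : ℝ≥0∞}
  {n : ℕ} {K C β d : ℝ}

theorem aestronglyMeasurable_weightedSumRemainder (hw : ∀ k, AEStronglyMeasurable (w k) μ)
    (hξ : ∀ k, AEStronglyMeasurable (ξ k) μ) (i m : ℕ) :
    AEStronglyMeasurable (weightedSumRemainder w ξ i m) μ :=
  Finset.aestronglyMeasurable_fun_sum _ fun k _ => ((hw k).sub (hw i)).mul (hξ k)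

theorem eLpNorm_weightedSumRemainder_le (hp : 1 ≤ p) (hβ : 1 / 2 < β) (hK : 0 ≤ K) (hC : 0 ≤ C)
    (hd : 0 ≤ d) (hwm : ∀ k, AEStronglyMeasurable (w k) μ)
    (hξm : ∀ k, AEStronglyMeasurable (ξ k) μ)
    (hw : ∀ i a, 1 ≤ a → i + a ≤ n →
      eLpNorm (fun ω => w (i + a) ω - w i ω) (2 * p) μ ≤ ENNReal.ofReal (K * (a * d) ^ β))
    (hξ : ∀ i a, 1 ≤ a → i + a ≤ n →
      eLpNorm (fun ω => ∑ k ∈ Ico i (i + a), ξ k ω) (2 * p) μ ≤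
        ENNReal.ofReal (C * (a * d) ^ (1 / 2 : ℝ)))
    {i m : ℕ} (him : i + m ≤ n) :
    eLpNorm (weightedSumRemainder w ξ i m) p μ ≤
      ENNReal.ofReal (K * C / (1 - (2 / 3) ^ (β - 1 / 2)) * (m * d) ^ (β + 1 / 2)) := by
  have hR := aestronglyMeasurable_weightedSumRemainder hwm hξm
  have hS : ∀ i a, AEStronglyMeasurable (fun ω => ∑ k ∈ Ico i (i + a), ξ k ω) μ :=
    fun i a => Finset.aestronglyMeasurable_fun_sum _ fun k _ => hξm k
  have hsewing := discrete_sewing_le (r := fun i m => eLpNorm (weightedSumRemainder w ξ i m) p μ)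
    (B := K * C * d ^ (β + 1 / 2)) (θ := β + 1 / 2) (by positivity) (by linarith) (by simp)
    (by simp) ?_ him
  · convert hsewing using 2
    rw [Real.mul_rpow (Nat.cast_nonneg m) hd, show β + 1 / 2 - 1 = β - 1 / 2 by ring]
    ring_nf
  intro i a b ha hb hiab
  have hdefect : eLpNorm (fun ω => (w (i + a) ω - w i ω) * ∑ k ∈ Ico (i + a) (i + a + b), ξ k ω)
      p μ ≤ ENNReal.ofReal (K * C * d ^ (β + 1 / 2) * ((a + b : ℕ) : ℝ) ^ (β + 1 / 2)) := by
    calc _ ≤ ENNReal.ofReal (K * (a * d) ^ β) * ENNReal.ofReal (C * (b * d) ^ (1 / 2 : ℝ)) :=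
          (eLpNorm_mul_le_mul_eLpNorm_two_mul ((hwm _).sub (hwm _)) (hS _ _) p).trans
            (mul_le_mul' (hw i a ha (by omega)) (hξ (i + a) b hb hiab))
      _ = ENNReal.ofReal (K * C * ((a * d) ^ β * (b * d) ^ (1 / 2 : ℝ))) := by
          rw [← ENNReal.ofReal_mul (by positivity)]; congr 1; ring
      _ ≤ ENNReal.ofReal (K * C * (((a + b : ℕ) * d) ^ β * ((a + b : ℕ) * d) ^ (1 / 2 : ℝ))) := by
          gcongr <;> exact_mod_cast (by omega)
      _ = _ := by
          rw [← Real.rpow_add' (by positivity) (by linarith), Real.mul_rpow (by positivity) hd]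
          congr 1; ring
  rw [weightedSumRemainder_add]
  calc _ ≤ eLpNorm (fun ω => weightedSumRemainder w ξ i a ω
          + weightedSumRemainder w ξ (i + a) b ω) p μ
        + eLpNorm (fun ω => (w (i + a) ω - w i ω) * ∑ k ∈ Ico (i + a) (i + a + b), ξ k ω) p μ :=
        eLpNorm_add_le ((hR _ _).add (hR _ _)) (((hwm _).sub (hwm _)).mul (hS _ _)) hp
    _ ≤ _ := add_le_add (eLpNorm_add_le (hR _ _) (hR _ _) hp) hdefect

theorem eLpNorm_sum_mul_le (hp : 1 ≤ p) (hβ : 1 / 2 < β) (hK : 0 ≤ K) (hC : 0 ≤ C)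
    (hd : 0 ≤ d) (hwm : ∀ k, AEStronglyMeasurable (w k) μ)
    (hξm : ∀ k, AEStronglyMeasurable (ξ k) μ)
    (hw₀ : ∀ i ≤ n, eLpNorm (w i) (2 * p) μ ≤ ENNReal.ofReal K)
    (hw : ∀ i a, 1 ≤ a → i + a ≤ n →
      eLpNorm (fun ω => w (i + a) ω - w i ω) (2 * p) μ ≤ ENNReal.ofReal (K * (a * d) ^ β))
    (hξ : ∀ i a, 1 ≤ a → i + a ≤ n →
      eLpNorm (fun ω => ∑ k ∈ Ico i (i + a), ξ k ω) (2 * p) μ ≤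
        ENNReal.ofReal (C * (a * d) ^ (1 / 2 : ℝ)))
    {i m : ℕ} (him : i + m ≤ n) :
    eLpNorm (fun ω => ∑ k ∈ Ico i (i + m), w k ω * ξ k ω) p μ ≤
      ENNReal.ofReal (K * C / (1 - (2 / 3) ^ (β - 1 / 2)) * (m * d) ^ (β + 1 / 2)
        + K * C * (m * d) ^ (1 / 2 : ℝ)) := by
  rcases Nat.eq_zero_or_pos m with rfl | hm
  · simp
  have hρ : (2 / 3 : ℝ) ^ (β - 1 / 2) < 1 :=
    Real.rpow_lt_one (by norm_num) (by norm_num) (by linarith)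
  have hS : AEStronglyMeasurable (fun ω => ∑ k ∈ Ico i (i + m), ξ k ω) μ :=
    Finset.aestronglyMeasurable_fun_sum _ fun k _ => hξm k
  have hA : 0 ≤ K * C / (1 - (2 / 3) ^ (β - 1 / 2)) := div_nonneg (by positivity) (by linarith)
  rw [sum_mul_eq_weightedSumRemainder_add, ENNReal.ofReal_add (by positivity) (by positivity)]
  refine (eLpNorm_add_le (aestronglyMeasurable_weightedSumRemainder hwm hξm i m)
    ((hwm i).mul hS) hp).trans (add_le_add
      (eLpNorm_weightedSumRemainder_le hp hβ hK hC hd hwm hξm hw hξ him) ?_)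
  calc _ ≤ ENNReal.ofReal K * ENNReal.ofReal (C * (m * d) ^ (1 / 2 : ℝ)) :=
        (eLpNorm_mul_le_mul_eLpNorm_two_mul (hwm i) hS p).trans
          (mul_le_mul' (hw₀ i (by omega)) (hξ i m hm him))
    _ = _ := by rw [← ENNReal.ofReal_mul hK, mul_assoc]

end LpBounds

theorem transfer_lemma_weighted_sums_general
    {Ω : Type*} [MeasurableSpace Ω] (μ : Measure Ω)
    (T : ℝ) (hT : 0 < T) (p β : ℝ) (hp : 1 ≤ p) (hβ : β ∈ Set.Ioo (1/2 : ℝ) 1)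
    (f : ℝ → Ω → ℝ) (hfmeas : ∀ t, AEStronglyMeasurable (f t) μ)
    (Kf : ℝ)
    (hfholder : ∀ u v : ℝ, 0 ≤ u → u < v → v ≤ T →
      eLpNorm (fun ω => f v ω - f u ω) (ENNReal.ofReal (2 * p)) μ ≤
        ENNReal.ofReal (Kf * (v - u) ^ β))
    (hfbdd : ∀ t : ℝ, 0 ≤ t → t ≤ T →
      eLpNorm (f t) (ENNReal.ofReal (2 * p)) μ ≤ ENNReal.ofReal Kf)
    (ξ : ℕ → ℕ → Ω → ℝ) (hξmeas : ∀ n k, AEStronglyMeasurable (ξ n k) μ)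
    (C : ℝ)
    (hg : ∀ (n : ℕ), 0 < n → ∀ i j : ℕ, i < j → j ≤ n →
      eLpNorm (fun ω => ∑ k ∈ Finset.Ico i j, ξ n k ω) (ENNReal.ofReal (2 * p)) μ ≤
        ENNReal.ofReal (C * (((j : ℝ) * T / n) - ((i : ℝ) * T / n)) ^ (1/2 : ℝ))) :
    ∃ C' : ℝ, 0 < C' ∧ ∀ (n : ℕ), 0 < n → ∀ i j : ℕ, i < j → j ≤ n →
      eLpNorm (fun ω => ∑ k ∈ Finset.Ico i j, f ((k : ℝ) * T / n) ω * ξ n k ω)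
          (ENNReal.ofReal p) μ ≤
        ENNReal.ofReal (C' * (((j : ℝ) * T / n) - ((i : ℝ) * T / n)) ^ (1/2 : ℝ)) := by
  obtain ⟨hβ, -⟩ := hβ
  set K := max Kf 1
  set C₀ := max C 1
  set A := K * C₀ / (1 - (2 / 3) ^ (β - 1 / 2))
  have hA : 0 < A := div_pos (by positivity)
    (sub_pos.2 (Real.rpow_lt_one (by norm_num) (by norm_num) (by linarith)))
  refine ⟨A * T ^ β + K * C₀, by positivity, fun n hn i j hij hjn => ?_⟩
  obtain ⟨m, rfl⟩ : ∃ m, j = i + m := ⟨j - i, by omega⟩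
  have h2p : ENNReal.ofReal (2 * p) = 2 * ENNReal.ofReal p := by
    rw [ENNReal.ofReal_mul zero_le_two, ENNReal.ofReal_ofNat]
  rw [h2p] at hfholder hfbdd hg
  have hgrid : ∀ i a : ℕ, ((i + a : ℕ) : ℝ) * T / n - i * T / n = a * (T / n) := fun i a => by
    push_cast; ring
  have hmem : ∀ k ≤ n, 0 ≤ (k : ℝ) * T / n ∧ (k : ℝ) * T / n ≤ T := fun k hk =>
    ⟨by positivity, div_le_of_le_mul₀ (by positivity) hT.le (by rw [mul_comm T]; gcongr)⟩
  have hbound := eLpNorm_sum_mul_le (w := fun k => f (k * T / n)) (ξ := ξ n)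
    (p := ENNReal.ofReal p) (K := K) (C := C₀) (d := T / n)
    (by simpa using hp) hβ (by positivity) (by positivity) (by positivity)
    (fun k => hfmeas _) (hξmeas n)
    (fun k hk => (hfbdd _ (hmem k hk).1 (hmem k hk).2).trans
      (ENNReal.ofReal_le_ofReal (le_max_left _ _)))
    (fun i a ha hia => by
      have hlt : (i : ℝ) * T / n < ((i + a : ℕ) : ℝ) * T / n := by
        rw [← sub_pos, hgrid]; exact mul_pos (by exact_mod_cast ha) (by positivity)
      have h := hfholder _ _ (hmem i (by omega)).1 hlt (hmem (i + a) hia).2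
      rw [hgrid] at h
      exact h.trans (ENNReal.ofReal_le_ofReal (by gcongr; exact le_max_left _ _)))
    (fun i a ha hia => by
      have h := hg n hn i (i + a) (by omega) hia
      rw [hgrid] at h
      exact h.trans (ENNReal.ofReal_le_ofReal (by gcongr; exact le_max_left _ _))) hjn
  have hmT : (m : ℝ) * (T / n) ≤ T := by rw [← mul_div_assoc]; exact (hmem m (by omega)).2
  refine hbound.trans (ENNReal.ofReal_le_ofReal ?_)
  rw [hgrid, Real.rpow_add' (by positivity) (by linarith), ← mul_assoc, add_mul]
  gcongr

/-- **Transfer lemma for weighted sums of increments.**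
Let `p ≥ 1` and let `f` be a process with `‖f_v - f_u‖_{L^{2p}} ≤ K_f (v-u)^β`
(`β ∈ (1/2,1)`) and `sup_t ‖f_t‖_{L^{2p}} < ∞`. If `g_n(t_i) = ∑_{k<i} ξ_{n,k}` on the
uniform grid `t_k = kT/n` satisfies `‖g_n(t_j) - g_n(t_i)‖_{L^{2p}} ≤ C |t_j - t_i|^{1/2}`
with `C` independent of `n`, then
`‖∑_{k=i}^{j-1} f_{t_k} ξ_{n,k}‖_{L^p} ≤ C' |t_j - t_i|^{1/2}` with `C' = C'(p,f)`
independent of `n`. -/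
theorem transfer_lemma_weighted_sums
    {Ω : Type*} [MeasurableSpace Ω] (μ : Measure Ω) [IsProbabilityMeasure μ]
    (T : ℝ) (hT : 0 < T) (p β : ℝ) (hp : 1 ≤ p) (hβ : β ∈ Set.Ioo (1/2 : ℝ) 1)
    (f : ℝ → Ω → ℝ) (hfmeas : ∀ t, AEStronglyMeasurable (f t) μ)
    (Kf : ℝ)
    (hfholder : ∀ u v : ℝ, 0 ≤ u → u < v → v ≤ T →
      eLpNorm (fun ω => f v ω - f u ω) (ENNReal.ofReal (2 * p)) μ ≤
        ENNReal.ofReal (Kf * (v - u) ^ β))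
    (hfbdd : ∀ t : ℝ, 0 ≤ t → t ≤ T →
      eLpNorm (f t) (ENNReal.ofReal (2 * p)) μ ≤ ENNReal.ofReal Kf)
    (ξ : ℕ → ℕ → Ω → ℝ) (hξmeas : ∀ n k, AEStronglyMeasurable (ξ n k) μ)
    (C : ℝ)
    (hg : ∀ (n : ℕ), 0 < n → ∀ i j : ℕ, i < j → j ≤ n →
      eLpNorm (fun ω => ∑ k ∈ Finset.Ico i j, ξ n k ω) (ENNReal.ofReal (2 * p)) μ ≤
        ENNReal.ofReal (C * (((j : ℝ) * T / n) - ((i : ℝ) * T / n)) ^ (1/2 : ℝ))) :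
    ∃ C' : ℝ, 0 < C' ∧ ∀ (n : ℕ), 0 < n → ∀ i j : ℕ, i < j → j ≤ n →
      eLpNorm (fun ω => ∑ k ∈ Finset.Ico i j, f ((k : ℝ) * T / n) ω * ξ n k ω)
          (ENNReal.ofReal p) μ ≤
        ENNReal.ofReal (C' * (((j : ℝ) * T / n) - ((i : ℝ) * T / n)) ^ (1/2 : ℝ)) :=
  transfer_lemma_weighted_sums_general μ T hT p β hp hβ f hfmeas Kf hfholder hfbdd ξ hξmeas C hg
end
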